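/- arXiv:1510.06618 — 7 statements merged into one kernel-verified Lean document; each statement's English description precedes it below -/
import Mathlib

section
/- Let K be an N×N Hermitian contracting matrix with eigenvalues λ_1,…,λ_N (listed with multiplicity) and P a determinantal sampling design with kernel K. Then the sample size #S has the law of a sum of N independent Bernoulli random variables with parameters λ_1,…,λ_N; equivalently, for every complex number z, ∑_{s ⊆ U} P(s) z^{#s} = det(I_N + (z−1)K) = ∏_{i=1}^N (1 − λ_i + λ_i z). -/
/-!
Writing `z ^ #s = ((z - 1) + 1) ^ #s = ∑_{t ⊆ s} (z - 1) ^ #t` and exchanging the sums turns the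
generating function of the sample size into `∑_t (z - 1) ^ #t ∑_{s ⊇ t} P(s)`, i.e. into
`∑_t (z - 1) ^ #t det(K_{|t})` by the defining property of a determinantal design. Multilinearity
of the determinant in the rows identifies this principal-minor expansion with `det(I + (z - 1)K)`,
and diagonalising `K` in an orthonormal eigenbasis factors the determinant as
`∏ᵢ (1 + (z - 1)λᵢ)`.
-/

/-- `P` is a determinantal sampling design with kernel `K`:
for every `s ⊆ U`, `∑_{s' ⊇ s} P(s') = det(K_{|s})`. -/
def IsDSD {N : ℕ} (P : Finset (Fin N) → ℝ) (K : Matrix (Fin N) (Fin N) ℂ) : Prop :=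
  ∀ s : Finset (Fin N),
    ((∑ s' ∈ Finset.univ.filter (fun s' => s ⊆ s'), P s' : ℝ) : ℂ) =
      (K.submatrix (fun i : {x // x ∈ s} => i.1) (fun j : {x // x ∈ s} => j.1)).det

open Finset Matrix

theorem Finset.sum_mul_pow_card_eq_sum_pow_card_mul_sum_superset {ι R : Type*} [Fintype ι]
    [DecidableEq ι] [CommRing R] (P : Finset ι → R) (z : R) :
    ∑ s, P s * z ^ #s = ∑ t, (z - 1) ^ #t * ∑ s with t ⊆ s, P s := by
  calc ∑ s, P s * z ^ #s = ∑ s, ∑ t ∈ s.powerset, (z - 1) ^ #t * P s := by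
        refine sum_congr rfl fun s _ => ?_
        rw [← sum_mul, mul_comm]
        congr
        simpa using (sum_pow_mul_eq_add_pow (z - 1) 1 s).symm
    _ = ∑ t, ∑ s with t ⊆ s, (z - 1) ^ #t * P s := sum_comm' (by simp)
    _ = _ := by simp only [mul_sum]

theorem Matrix.det_one_add_smul_eq_sum_det_submatrix {n R : Type*} [Fintype n] [DecidableEq n]
    [CommRing R] (w : R) (M : Matrix n n R) :
    det (1 + w • M) = ∑ s : Finset n, w ^ #s * (M.submatrix (↑) (↑) : Matrix s s R).det := by
  rw [add_comm]
  change detRowAlternating ((fun i => (w • M) i) + (fun i => (1 : Matrix n n R) i)) = _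
  rw [detRowAlternating.map_add_univ]
  refine sum_congr rfl fun s _ => ?_
  have hrows : s.piecewise (fun i => (w • M) i) (fun i => (1 : Matrix n n R) i) =
      fun i => (if i ∈ s then w else 1) • s.piecewise M.row (1 : Matrix n n R).row i := by
    funext i j
    by_cases h : i ∈ s <;> simp [piecewise, h]
  rw [hrows, detRowAlternating.map_smul_univ, prod_ite_mem, univ_inter, prod_const, smul_eq_mul]
  exact congrArg _ (det_piecewise_one_eq_submatrix_det M s)

theorem Matrix.IsHermitian.det_one_add_smul {n 𝕜 : Type*} [Fintype n] [DecidableEq n] [RCLike 𝕜]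
    {A : Matrix n n 𝕜} (hA : A.IsHermitian) (w : 𝕜) :
    det (1 + w • A) = ∏ i, (1 + w * hA.eigenvalues i) := by
  set U : Matrix n n 𝕜 := ↑hA.eigenvectorUnitary
  have hU : U * star U = 1 := mem_unitaryGroup_iff.mp hA.eigenvectorUnitary.2
  have hconj : 1 + w • A = U * diagonal (fun i => 1 + w * hA.eigenvalues i) * star U := by
    conv_lhs => rw [hA.spectral_theorem, Unitary.conjStarAlgAut_apply]
    have hdiag : diagonal (fun i => 1 + w * hA.eigenvalues i) =
        1 + w • diagonal (RCLike.ofReal ∘ hA.eigenvalues) := by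
      rw [← diagonal_one, ← diagonal_smul, ← diagonal_add]
      rfl
    rw [hdiag, mul_add, add_mul, mul_one, hU, Matrix.mul_smul, Matrix.smul_mul]
  rw [hconj, det_mul, det_mul, mul_right_comm, ← det_mul, hU, det_one, one_mul, det_diagonal]

theorem IsDSD.sum_mul_pow_card_eq_det {N : ℕ} {P : Finset (Fin N) → ℝ}
    {K : Matrix (Fin N) (Fin N) ℂ} (hP : IsDSD P K) (z : ℂ) :
    ∑ s, (P s : ℂ) * z ^ #s = det (1 + (z - 1) • K) := by
  rw [sum_mul_pow_card_eq_sum_pow_card_mul_sum_superset, det_one_add_smul_eq_sum_det_submatrix]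
  exact sum_congr rfl fun t _ => by rw [← hP t, Complex.ofReal_sum]

theorem sample_size_law_general {N : ℕ} (K : Matrix (Fin N) (Fin N) ℂ) (hK : K.IsHermitian)
    (P : Finset (Fin N) → ℝ)
    (hDSD : IsDSD P K) :
    ∀ z : ℂ,
      (∑ s : Finset (Fin N), (P s : ℂ) * z ^ s.card) =
        ((1 : Matrix (Fin N) (Fin N) ℂ) + (z - 1) • K).det ∧
      ((1 : Matrix (Fin N) (Fin N) ℂ) + (z - 1) • K).det =
        ∏ i, (1 - (hK.eigenvalues i : ℂ) + (hK.eigenvalues i : ℂ) * z) := by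
  intro z
  refine ⟨hDSD.sum_mul_pow_card_eq_det z, ?_⟩
  rw [hK.det_one_add_smul]
  exact prod_congr rfl fun i _ => by rw [RCLike.ofReal_eq_complex_ofReal]; ring

/-- **Law of the sample size of a determinantal sampling design.**
If `P = DSD(K)` with `K` Hermitian contracting with eigenvalues `λ₁, …, λ_N`, then
the sample size `#S` is distributed as a sum of independent Bernoulli variables of
parameters `λ₁, …, λ_N`; equivalently, for every `z : ℂ`, the probability generating
function satisfies `∑_s P(s) z^{#s} = det(I + (z−1)K) = ∏ᵢ (1 − λᵢ + λᵢ z)`. -/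
theorem sample_size_law {N : ℕ} (K : Matrix (Fin N) (Fin N) ℂ) (hK : K.IsHermitian)
    (hcontr : ∀ i, hK.eigenvalues i ∈ Set.Icc (0 : ℝ) 1)
    (P : Finset (Fin N) → ℝ) (hpos : ∀ s, 0 ≤ P s) (hsum : ∑ s, P s = 1)
    (hDSD : IsDSD P K) :
    ∀ z : ℂ,
      (∑ s : Finset (Fin N), (P s : ℂ) * z ^ s.card) =
        ((1 : Matrix (Fin N) (Fin N) ℂ) + (z - 1) • K).det ∧
      ((1 : Matrix (Fin N) (Fin N) ℂ) + (z - 1) • K).det =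
        ∏ i, (1 - (hK.eigenvalues i : ℂ) + (hK.eigenvalues i : ℂ) * z) :=
  sample_size_law_general K hK P hDSD
end

section
/- Let K be an N×N Hermitian matrix and P a determinantal sampling design with kernel K. Then the variance of the sample size satisfies ∑_{s ⊆ U} P(s)·(#s − tr(K))² = tr(K − K²). -/
open Finset

section SubsetSums

variable {α R : Type*} [Fintype α] [DecidableEq α] [CommSemiring R]

theorem sum_mul_card_eq_sum_sum_superset (f : Finset α → R) :
    ∑ s, f s * (#s : R) = ∑ i, ∑ s ∈ univ.filter (fun s => {i} ⊆ s), f s := by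
  simp only [singleton_subset_iff, sum_filter]
  rw [sum_comm]
  refine sum_congr rfl fun s _ => ?_
  simp only [sum_ite_mem, univ_inter, sum_const, nsmul_eq_mul, mul_comm]

theorem sum_mul_card_sq_eq_sum_sum_sum_superset (f : Finset α → R) :
    ∑ s, f s * (#s : R) ^ 2 = ∑ i, ∑ j, ∑ s ∈ univ.filter (fun s => {i, j} ⊆ s), f s := by
  simp only [insert_subset_iff, singleton_subset_iff, sum_filter]
  rw [sum_comm]
  simp_rw [sum_comm (s := (univ : Finset α)) (t := (univ : Finset (Finset α)))]
  refine sum_congr rfl fun s _ => ?_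
  simp only [ite_and, sum_ite_mem, univ_inter, sum_const, nsmul_eq_mul]
  rw [← mul_sum, sum_ite_mem, univ_inter, sum_const, nsmul_eq_mul]
  ring

end SubsetSums

theorem sum_mul_sub_sq {ι R : Type*} [CommRing R] (s : Finset ι) (w x : ι → R) (m : R) :
    ∑ i ∈ s, w i * (x i - m) ^ 2 =
      ∑ i ∈ s, w i * x i ^ 2 - 2 * m * ∑ i ∈ s, w i * x i + m ^ 2 * ∑ i ∈ s, w i := by
  simp only [mul_sum, ← sum_sub_distrib, ← sum_add_distrib]
  exact sum_congr rfl fun i _ => by ring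

section PrincipalMinors

variable {n R : Type*} [DecidableEq n] [CommRing R] (K : Matrix n n R)

theorem Matrix.det_submatrix_singleton (i : n) :
    (K.submatrix (fun x : {x // x ∈ ({i} : Finset n)} => x.1)
      (fun x : {x // x ∈ ({i} : Finset n)} => x.1)).det = K i i := by
  have : Unique {x // x ∈ ({i} : Finset n)} :=
    ⟨⟨⟨i, mem_singleton_self i⟩⟩, fun a => Subtype.ext (mem_singleton.mp a.2)⟩
  rw [det_unique, submatrix_apply, mem_singleton.mp (default : {x // x ∈ ({i} : Finset n)}).2]

theorem Matrix.det_submatrix_pair {i j : n} (hij : i ≠ j) :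
    (K.submatrix (fun x : {x // x ∈ ({i, j} : Finset n)} => x.1)
      (fun x : {x // x ∈ ({i, j} : Finset n)} => x.1)).det = K i i * K j j - K i j * K j i := by
  let e : Fin 2 ≃ {x // x ∈ ({i, j} : Finset n)} :=
    { toFun := ![⟨i, by simp⟩, ⟨j, by simp⟩]
      invFun := fun x => if x.1 = i then 0 else 1
      left_inv := fun a => by fin_cases a <;> simp [hij.symm]
      right_inv := by
        rintro ⟨x, hx⟩
        rcases mem_insert.mp hx with rfl | hx
        · simp
        · obtain rfl := mem_singleton.mp hx
          simp [hij.symm] }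
  rw [← det_submatrix_equiv_self e, det_fin_two]
  simp [e]

end PrincipalMinors

theorem Matrix.IsHermitian.coe_re_trace {n 𝕜 : Type*} [Fintype n] [RCLike 𝕜]
    {A : Matrix n n 𝕜} (hA : A.IsHermitian) : (RCLike.re A.trace : 𝕜) = A.trace := by
  simp only [Matrix.trace, map_sum, Matrix.diag_apply, hA.coe_re_apply_self]

namespace IsDSD

variable {N : ℕ} {P : Finset (Fin N) → ℝ} {K : Matrix (Fin N) (Fin N) ℂ}

theorem sum_eq_one (h : IsDSD P K) : ∑ s, (P s : ℂ) = 1 := by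
  simpa [Matrix.det_isEmpty] using h ∅

theorem sum_mul_card (h : IsDSD P K) : ∑ s, (P s : ℂ) * #s = K.trace := by
  rw [sum_mul_card_eq_sum_sum_superset]
  refine sum_congr rfl fun i _ => ?_
  rw [← Complex.ofReal_sum, h, Matrix.det_submatrix_singleton, Matrix.diag_apply]

theorem sum_superset_pair (h : IsDSD P K) (i j : Fin N) :
    ∑ s ∈ univ.filter (fun s => {i, j} ⊆ s), (P s : ℂ) =
      K i i * K j j - K i j * K j i + if i = j then K i i else 0 := by
  rw [← Complex.ofReal_sum, h]
  by_cases hij : i = j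
  · subst hij
    rw [insert_eq_of_mem (mem_singleton_self i), Matrix.det_submatrix_singleton]
    simp
  · simp [Matrix.det_submatrix_pair K hij, hij]

theorem sum_mul_card_sq (h : IsDSD P K) :
    ∑ s, (P s : ℂ) * #s ^ 2 = K.trace + K.trace ^ 2 - (K * K).trace := by
  rw [sum_mul_card_sq_eq_sum_sum_sum_superset]
  simp only [h.sum_superset_pair, sum_add_distrib, sum_sub_distrib, sum_ite_eq, mem_univ,
    if_true, ← sum_mul_sum, Matrix.trace, Matrix.diag_apply, Matrix.mul_apply]
  ring

end IsDSD

theorem variance_sample_size_general {N : ℕ} (K : Matrix (Fin N) (Fin N) ℂ) (hK : K.IsHermitian)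
    (P : Finset (Fin N) → ℝ) (hDSD : IsDSD P K) :
    ((∑ s : Finset (Fin N), P s * ((s.card : ℝ) - (Matrix.trace K).re) ^ 2 : ℝ) : ℂ) =
      Matrix.trace (K - K * K) := by
  have htrace : (K.trace.re : ℂ) = K.trace := hK.coe_re_trace
  push_cast
  rw [htrace, sum_mul_sub_sq, hDSD.sum_mul_card_sq, hDSD.sum_mul_card,
    hDSD.sum_eq_one, Matrix.trace_sub]
  ring

/-- **Variance of the sample size of a determinantal sampling design**:
`∑_s P(s)·(#s − tr K)² = tr(K − K²)`. -/
theorem variance_sample_size {N : ℕ} (K : Matrix (Fin N) (Fin N) ℂ) (hK : K.IsHermitian)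
    (P : Finset (Fin N) → ℝ) (hpos : ∀ s, 0 ≤ P s) (hsum : ∑ s, P s = 1)
    (hDSD : IsDSD P K) :
    ((∑ s : Finset (Fin N), P s * ((s.card : ℝ) - (Matrix.trace K).re) ^ 2 : ℝ) : ℂ) =
      Matrix.trace (K - K * K) :=
  variance_sample_size_general K hK P hDSD
end

section
/- Let K be an N×N Hermitian contracting matrix and P a determinantal sampling design with kernel K. Then P is of fixed size (i.e., there exists an integer n such that P(s) = 0 whenever #s ≠ n) if and only if K is a projection matrix (K² = K); and in that case the fixed size is n = tr(K) = rank(K). -/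
open Finset Matrix

namespace Matrix

variable {n R : Type*} [CommRing R] [DecidableEq n]

theorem det_submatrix_singleton_s4 (A : Matrix n n R) (i : n) :
    (A.submatrix (fun x : {x // x ∈ ({i} : Finset n)} => x.1)
      (fun x : {x // x ∈ ({i} : Finset n)} => x.1)).det = A i i := by
  rw [det_unique]
  simp

theorem det_submatrix_pair_s4 (A : Matrix n n R) {i j : n} (hij : i ≠ j) :
    (A.submatrix (fun x : {x // x ∈ ({i, j} : Finset n)} => x.1)
      (fun x : {x // x ∈ ({i, j} : Finset n)} => x.1)).det
      = A i i * A j j - A i j * A j i := by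
  let e : Fin 2 ≃ {x // x ∈ ({i, j} : Finset n)} :=
    { toFun := ![⟨i, by simp⟩, ⟨j, by simp⟩]
      invFun := fun x => if x.1 = i then 0 else 1
      left_inv := fun x => by fin_cases x <;> simp [hij.symm]
      right_inv := by
        rintro ⟨x, hx⟩
        rcases mem_insert.1 hx with rfl | hx
        · simp
        · obtain rfl := mem_singleton.1 hx
          simp [hij.symm] }
  rw [← det_submatrix_equiv_self e, det_fin_two]
  simp [e]

end Matrix

namespace Finset

variable {ι R : Type*} [Fintype ι] [DecidableEq ι] [CommSemiring R]

theorem sum_mul_card_eq_sum_sum_mem (P : Finset ι → R) :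
    ∑ s, P s * #s = ∑ i, ∑ s with i ∈ s, P s := by
  calc ∑ s, P s * #s = ∑ s, ∑ i, if i ∈ s then P s else 0 :=
        sum_congr rfl fun s _ => by simp [mul_comm]
    _ = _ := by
        simp only [sum_filter]
        exact sum_comm

theorem sum_mul_card_sq_eq_sum_sum_sum_mem (P : Finset ι → R) :
    ∑ s, P s * #s ^ 2 = ∑ i, ∑ j, ∑ s with i ∈ s ∧ j ∈ s, P s := by
  calc ∑ s, P s * #s ^ 2 = ∑ s, ∑ i, ∑ j, if i ∈ s ∧ j ∈ s then P s else 0 :=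
        sum_congr rfl fun s _ => by simp [ite_and, sq, mul_comm, mul_left_comm]
    _ = ∑ i, ∑ s, ∑ j, if i ∈ s ∧ j ∈ s then P s else 0 := sum_comm
    _ = _ := by
        simp only [sum_filter]
        exact sum_congr rfl fun i _ => sum_comm

end Finset

section WeightedVariance

variable {α : Type*} [Fintype α] (p f : α → ℝ)

def weightedMean : ℝ := ∑ a, p a * f a

def weightedVariance : ℝ := ∑ a, p a * (f a - weightedMean p f) ^ 2

variable {p f}

theorem weightedVariance_eq (hsum : ∑ a, p a = 1) :
    weightedVariance p f = weightedMean p (fun a => f a ^ 2) - weightedMean p f ^ 2 := by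
  set m := weightedMean p f
  have hm : ∑ a, p a * f a = m := rfl
  calc weightedVariance p f
      = ∑ a, p a * f a ^ 2 - 2 * m * ∑ a, p a * f a + m ^ 2 * ∑ a, p a := by
        simp only [weightedVariance, mul_sum, ← sum_sub_distrib, ← sum_add_distrib]
        exact sum_congr rfl fun a _ => by ring
    _ = _ := by rw [hm, hsum, weightedMean]; ring

theorem weightedVariance_eq_zero_iff (hnonneg : ∀ a, 0 ≤ p a) :
    weightedVariance p f = 0 ↔ ∀ a, p a ≠ 0 → f a = weightedMean p f := by
  rw [weightedVariance,
    sum_eq_zero_iff_of_nonneg fun a _ => mul_nonneg (hnonneg a) (sq_nonneg _)]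
  simp only [mem_univ, true_implies, mul_eq_zero, pow_eq_zero_iff two_ne_zero, sub_eq_zero,
    or_iff_not_imp_left]

theorem weightedMean_eq_of_forall {c : ℝ} (hsum : ∑ a, p a = 1)
    (h : ∀ a, p a ≠ 0 → f a = c) :
    weightedMean p f = c := by
  calc weightedMean p f = ∑ a, p a * c := sum_congr rfl fun a _ => by
        by_cases ha : p a = 0
        · simp [ha]
        · rw [h a ha]
    _ = c := by rw [← sum_mul, hsum, one_mul]

end WeightedVariance

namespace Matrix

variable {n : Type*} [Fintype n] [DecidableEq n]

theorem trace_eq_rank_of_isIdempotentElem {K : Type*} [Field K] {A : Matrix n n K}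
    (hA : IsIdempotentElem A) : A.trace = A.rank := by
  have hlin : IsIdempotentElem A.toLin' := hA.map toLinAlgEquiv'
  rw [← trace_toLin'_eq, ((LinearMap.isProj_range_iff_isIdempotentElem _).2 hlin).trace, rank]
  rfl

variable {𝕜 : Type*} [RCLike 𝕜] {A : Matrix n n 𝕜}

theorem IsHermitian.trace_cfc (hA : A.IsHermitian) (f : ℝ → ℝ) :
    (cfc f A).trace = ∑ i, (f (hA.eigenvalues i) : 𝕜) := by
  rw [hA.cfc_eq, IsHermitian.cfc, Unitary.conjStarAlgAut_apply, trace_mul_cycle,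
    Unitary.coe_star_mul_self, one_mul, trace_diagonal]
  rfl

theorem IsHermitian.isIdempotentElem_of_trace_mul_self (hA : A.IsHermitian)
    (heig : ∀ i, hA.eigenvalues i ∈ Set.Icc (0 : ℝ) 1) (htr : (A * A).trace = A.trace) :
    IsIdempotentElem A := by
  have hsum : ∑ i, hA.eigenvalues i * (1 - hA.eigenvalues i) = 0 := by
    have h := hA.trace_cfc (fun x => x * (1 - x))
    rw [show (fun x : ℝ => x * (1 - x)) = fun x => x - x ^ 2 by ext; ring, cfc_sub _ _ A,
      cfc_id' ℝ A, cfc_pow_id A 2, trace_sub, sq, htr, sub_self] at h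
    exact_mod_cast h.symm
  have h01 : ∀ i, hA.eigenvalues i * (1 - hA.eigenvalues i) = 0 :=
    fun i => (sum_eq_zero_iff_of_nonneg (fun j _ =>
      mul_nonneg (heig j).1 (sub_nonneg.2 (heig j).2))).1 hsum i (mem_univ i)
  rw [isIdempotentElem_iff_spectrum_subset ℝ A hA.isSelfAdjoint,
    hA.spectrum_real_eq_range_eigenvalues]
  rintro _ ⟨i, rfl⟩
  rcases mul_eq_zero.1 (h01 i) with h | h
  · simp [h]
  · simp [sub_eq_zero.1 h]

end Matrix

namespace IsDSD

variable {N : ℕ} {P : Finset (Fin N) → ℝ} {K : Matrix (Fin N) (Fin N) ℂ}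

theorem sum_filter_mem (hP : IsDSD P K) (i : Fin N) :
    ∑ s with i ∈ s, (P s : ℂ) = K i i := by
  rw [← det_submatrix_singleton_s4 K i, ← hP {i}, Complex.ofReal_sum]
  simp only [singleton_subset_iff]

theorem sum_filter_mem_mem (hP : IsDSD P K) (i j : Fin N) :
    ∑ s with i ∈ s ∧ j ∈ s, (P s : ℂ)
      = K i i * K j j - K i j * K j i + if i = j then K i i else 0 := by
  by_cases hij : i = j
  · subst hij
    simp only [and_self, hP.sum_filter_mem, if_true]
    ring
  · rw [if_neg hij, add_zero, ← det_submatrix_pair_s4 K hij, ← hP {i, j}, Complex.ofReal_sum]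
    simp only [insert_subset_iff, singleton_subset_iff]

theorem weightedMean_card (hP : IsDSD P K) :
    (weightedMean P (fun s => (#s : ℝ)) : ℂ) = K.trace := by
  rw [weightedMean, sum_mul_card_eq_sum_sum_mem]
  push_cast
  exact sum_congr rfl fun i _ => hP.sum_filter_mem i

theorem weightedMean_card_sq (hP : IsDSD P K) :
    (weightedMean P (fun s => (#s : ℝ) ^ 2) : ℂ) = K.trace ^ 2 - (K * K).trace + K.trace := by
  rw [weightedMean, sum_mul_card_sq_eq_sum_sum_sum_mem]
  push_cast
  simp only [hP.sum_filter_mem_mem, sum_add_distrib, sum_sub_distrib, sum_ite_eq, mem_univ,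
    if_true]
  rw [sq, trace, sum_mul_sum, trace]
  simp [mul_apply]

theorem weightedVariance_card (hP : IsDSD P K) (hsum : ∑ s, P s = 1) :
    (weightedVariance P (fun s => (#s : ℝ)) : ℂ) = K.trace - (K * K).trace := by
  rw [weightedVariance_eq hsum]
  push_cast
  rw [hP.weightedMean_card, hP.weightedMean_card_sq]
  ring

end IsDSD

/-- **Fixed size determinantal sampling designs are exactly those with projection
kernels.** A determinantal sampling design with Hermitian contracting kernel `K` is of
fixed size (there is an `n` with `P(s) = 0` whenever `#s ≠ n`) iff `K² = K`; in that
case the fixed size is `n = tr(K) = rank(K)`. -/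
theorem fixed_size_iff_projection {N : ℕ} (K : Matrix (Fin N) (Fin N) ℂ)
    (hK : K.IsHermitian) (hcontr : ∀ i, hK.eigenvalues i ∈ Set.Icc (0 : ℝ) 1)
    (P : Finset (Fin N) → ℝ) (hpos : ∀ s, 0 ≤ P s) (hsum : ∑ s, P s = 1)
    (hDSD : IsDSD P K) :
    ((∃ n : ℕ, ∀ s : Finset (Fin N), s.card ≠ n → P s = 0) ↔ K * K = K) ∧
      (K * K = K →
        Matrix.trace K = (K.rank : ℂ) ∧ ∀ s : Finset (Fin N), P s ≠ 0 → s.card = K.rank) := by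
  have hvar := hDSD.weightedVariance_card hsum
  have hvar_zero_iff := weightedVariance_eq_zero_iff (f := fun s => (#s : ℝ)) hpos
  have of_proj (hproj : K * K = K) :
      K.trace = K.rank ∧ ∀ s : Finset (Fin N), P s ≠ 0 → s.card = K.rank := by
    have htr : K.trace = K.rank := trace_eq_rank_of_isIdempotentElem hproj
    have hvar0 : weightedVariance P (fun s => (#s : ℝ)) = 0 := by
      rw [hproj, sub_self] at hvar
      exact_mod_cast hvar
    refine ⟨htr, fun s hs => ?_⟩
    have hcard : ((#s : ℝ) : ℂ) = K.rank := by
      rw [hvar_zero_iff.1 hvar0 s hs, hDSD.weightedMean_card, htr]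
    exact_mod_cast hcard
  refine ⟨⟨fun ⟨n, hn⟩ => ?_, fun hproj => ⟨K.rank, fun s hs => ?_⟩⟩, of_proj⟩
  · have hmean : weightedMean P (fun s => (#s : ℝ)) = n :=
      weightedMean_eq_of_forall hsum fun s hs => by rw [not_imp_comm.1 (hn s) hs]
    have hvar0 : weightedVariance P (fun s => (#s : ℝ)) = 0 :=
      hvar_zero_iff.2 fun s hs => by rw [hmean, not_imp_comm.1 (hn s) hs]
    rw [hvar0, Complex.ofReal_zero, eq_comm, sub_eq_zero] at hvar
    exact hK.isIdempotentElem_of_trace_mul_self hcontr hvar.symm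
  · by_contra hP
    exact hs ((of_proj hproj).2 s hP)
end

section
/- Let K be an N×N Hermitian matrix and P a determinantal sampling design with kernel K. Define the complementary design P^c by P^c(s) = P(U ∖ s) for every s ⊆ U. Then P^c is a determinantal sampling design with kernel I_N − K, i.e., for every s ⊆ U, ∑_{s' ⊇ s} P^c(s') = det((I_N − K)_{|s}). -/
/-!
By inclusion–exclusion, the inclusion probability of `s` under the complementary design,
`∑_{s' ⊇ s} P(U ∖ s') = ∑_{t ∩ s = ∅} P(t)`, equals the alternating sum
`∑_{r ⊆ s} (-1)^|r| ∑_{t ⊇ r} P(t) = ∑_{r ⊆ s} (-1)^|r| det K_r`.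
Expanding `det ((I - K)_s)` multilinearly in its rows yields the same alternating sum of
principal minors of `K`.
-/

open Finset Matrix

section InclusionExclusion

variable {α R : Type*} [DecidableEq α] [CommRing R]

theorem sum_powerset_neg_one_pow_card_ring (x : Finset α) :
    ∑ r ∈ x.powerset, (-1 : R) ^ r.card = if x = ∅ then 1 else 0 := by
  have h := congrArg (Int.cast : ℤ → R) (sum_powerset_neg_one_pow_card (x := x))
  push_cast at h
  exact h

theorem sum_superset_compl_eq_sum_powerset [Fintype α] (P : Finset α → R) (s : Finset α) :
    ∑ t ∈ univ.filter (s ⊆ ·), P tᶜ =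
      ∑ r ∈ s.powerset, (-1) ^ r.card * ∑ t ∈ univ.filter (r ⊆ ·), P t := by
  symm
  calc ∑ r ∈ s.powerset, (-1) ^ r.card * ∑ t ∈ univ.filter (r ⊆ ·), P t
      = ∑ t, (∑ r ∈ (s ∩ t).powerset, (-1 : R) ^ r.card) * P t := by
        simp_rw [sum_filter, mul_sum, mul_ite, mul_zero]
        rw [sum_comm]
        refine sum_congr rfl fun t _ => ?_
        rw [← sum_filter, sum_mul]
        congr 1
        ext r
        simp only [mem_filter, mem_powerset, subset_inter_iff]
    _ = ∑ t ∈ univ.filter (s ⊆ ·ᶜ), P t := by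
        simp_rw [sum_powerset_neg_one_pow_card_ring, ite_mul, one_mul, zero_mul, sum_filter,
          subset_compl_iff_disjoint_right, disjoint_iff_inter_eq_empty]
    _ = ∑ t ∈ univ.filter (s ⊆ ·), P tᶜ := by
        simp_rw [sum_filter]
        exact Fintype.sum_bijective _ compl_involutive.bijective _ _ fun t => by
          simp only [compl_compl]

end InclusionExclusion

section PrincipalMinors

variable {n R : Type*} [DecidableEq n] [CommRing R]

theorem det_add_one_eq_sum_det_submatrix [Fintype n] (M : Matrix n n R) :
    (M + 1).det = ∑ s : Finset n, (M.submatrix (↑) (↑) : Matrix s s R).det :=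
  (detRowAlternating.map_add_univ M.row (1 : Matrix n n R).row).trans
    (sum_congr rfl fun s _ => det_piecewise_one_eq_submatrix_det M s)

theorem det_one_sub_eq_sum_det_submatrix [Fintype n] (M : Matrix n n R) :
    (1 - M).det = ∑ s : Finset n, (-1) ^ s.card * (M.submatrix (↑) (↑) : Matrix s s R).det := by
  rw [sub_eq_neg_add, det_add_one_eq_sum_det_submatrix]
  simp only [submatrix_neg, Pi.neg_apply, det_neg, Fintype.card_coe]

theorem det_submatrix_submatrix_subtype (K : Matrix n n R) {s : Finset n} (t : Finset s) :
    ((K.submatrix (↑) (↑) : Matrix s s R).submatrix (↑) (↑) : Matrix t t R).det =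
      (K.submatrix (↑) (↑) : Matrix (t.map (Function.Embedding.subtype _)) _ R).det := by
  rw [← det_submatrix_equiv_self (t.equivMap (Function.Embedding.subtype _))]
  rfl

theorem sum_finset_subtype_eq_sum_powerset {M : Type*} [AddCommMonoid M] (s : Finset n)
    (f : Finset n → M) :
    ∑ t : Finset s, f (t.map (Function.Embedding.subtype _)) = ∑ r ∈ s.powerset, f r := by
  refine sum_nbij' (fun t => t.map (Function.Embedding.subtype _)) (fun r => r.subtype (· ∈ s))
    (fun t _ => mem_powerset.2 fun x hx => t.property_of_mem_map_subtype hx)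
    (fun _ _ => mem_univ _) (fun t _ => ?_)
    (fun r hr => subtype_map_of_mem fun x hx => mem_powerset.1 hr hx) (fun _ _ => rfl)
  ext x
  simp

theorem det_one_sub_submatrix_eq_sum_powerset (K : Matrix n n R) (s : Finset n) :
    ((1 - K).submatrix (↑) (↑) : Matrix s s R).det =
      ∑ r ∈ s.powerset, (-1) ^ r.card * (K.submatrix (↑) (↑) : Matrix r r R).det := by
  rw [submatrix_sub, Pi.sub_apply, Pi.sub_apply, submatrix_one _ Subtype.val_injective,
    det_one_sub_eq_sum_det_submatrix, ← sum_finset_subtype_eq_sum_powerset]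
  exact sum_congr rfl fun t _ => by rw [det_submatrix_submatrix_subtype, card_map]

end PrincipalMinors

theorem complementary_design_general {N : ℕ} (K : Matrix (Fin N) (Fin N) ℂ)
    (P : Finset (Fin N) → ℝ)
    (hDSD : IsDSD P K) :
    IsDSD (fun s => P sᶜ) (1 - K) := by
  intro s
  have hincl : ∀ r : Finset (Fin N), ∑ t ∈ univ.filter (r ⊆ ·), (P t : ℂ) =
      (K.submatrix (↑) (↑) : Matrix r r ℂ).det := fun r => by
    rw [← hDSD r]; push_cast; rfl
  push_cast
  rw [det_one_sub_submatrix_eq_sum_powerset,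
    sum_superset_compl_eq_sum_powerset (fun t => (P t : ℂ))]
  simp_rw [hincl]

/-- **Complementary design.** If `P` is a determinantal sampling design with Hermitian
kernel `K`, then the complementary design `P^c(s) = P(U ∖ s)` is a determinantal
sampling design with kernel `I_N − K`: for every `s`,
`∑_{s' ⊇ s} P^c(s') = det((I_N − K)_{|s})`. -/
theorem complementary_design {N : ℕ} (K : Matrix (Fin N) (Fin N) ℂ) (hK : K.IsHermitian)
    (P : Finset (Fin N) → ℝ) (hpos : ∀ s, 0 ≤ P s) (hsum : ∑ s, P s = 1)
    (hDSD : IsDSD P K) :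
    IsDSD (fun s => P sᶜ) (1 - K) :=
  complementary_design_general K P hDSD
end

section
/- Let 0 < n < N be integers, K an N×N Hermitian contracting matrix, and P a determinantal sampling design with kernel K. Then P is (N,n)-simple (i.e., π_k = K_{kk} = n/N for all k and π_{kl} = K_{kk}K_{ll} − |K_{kl}|² = n(n−1)/(N(N−1)) for all k ≠ l) if and only if there exists an n×N complex matrix F with columns f_1,…,f_N satisfying: ‖f_k‖ = 1 for all k; |f̄_k^T f_l| = √((N−n)/(n(N−1))) for all k ≠ l; F F̄^T = (N/n) I_n (i.e., F is an equiangular tight frame of ℂ^n); and K = (n/N) F̄^T F. -/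
/-- First order inclusion probability of the sampling design `P`. -/
def incl1 {N : ℕ} (P : Finset (Fin N) → ℝ) (k : Fin N) : ℝ :=
  ∑ s ∈ Finset.univ.filter (fun s => k ∈ s), P s

/-- Second order inclusion probability of the sampling design `P`. -/
def incl2 {N : ℕ} (P : Finset (Fin N) → ℝ) (k l : Fin N) : ℝ :=
  ∑ s ∈ Finset.univ.filter (fun s => k ∈ s ∧ l ∈ s), P s

/-!
By the determinantal property, `π_k = K_kk` and `π_kl = K_kk K_ll - |K_kl|²`, so simplicity says
exactly that `K` has constant diagonal `n/N` and off-diagonal entries of constant modulus. Such a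
`K` satisfies `tr K = tr K² = n`; for a Hermitian contraction this forces every eigenvalue to be
`0` or `1`, so `K` is the orthogonal projection onto an `n`-dimensional subspace and factors as
`K = G* G` with `G G* = 1`. Rescaling, `F = √(N/n) G` is the equiangular tight frame. Conversely
the entries of `(n/N) F* F` are read off from the frame conditions.
-/

theorem Matrix.det_submatrix_pair_s11 {R m : Type*} [CommRing R] [DecidableEq m] (A : Matrix m m R)
    {k l : m} (hkl : k ≠ l) :
    (A.submatrix (fun i : {x // x ∈ ({k, l} : Finset m)} => i.1)
      (fun j : {x // x ∈ ({k, l} : Finset m)} => j.1)).det = A k k * A l l - A k l * A l k := by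
  let e : Fin 2 ≃ {x // x ∈ ({k, l} : Finset m)} :=
    Equiv.ofBijective (fun i => ⟨![k, l] i, by fin_cases i <;> simp⟩) <|
      (Fintype.bijective_iff_injective_and_card _).2
        ⟨fun i j hij => by fin_cases i <;> fin_cases j <;> simp_all [Subtype.ext_iff, hkl.symm],
          by simp [Finset.card_pair hkl]⟩
  rw [← det_submatrix_equiv_self e, det_fin_two]
  simp [e]

namespace IsDSD

variable {N : ℕ} {P : Finset (Fin N) → ℝ} {K : Matrix (Fin N) (Fin N) ℂ}

theorem incl1_eq (hP : IsDSD P K) (k : Fin N) : (incl1 P k : ℂ) = K k k := by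
  have h := hP {k}
  simp only [Finset.singleton_subset_iff] at h
  rw [incl1, h, Matrix.det_unique]
  rfl

theorem incl2_eq (hP : IsDSD P K) (hK : K.IsHermitian) {k l : Fin N} (hkl : k ≠ l) :
    (incl2 P k l : ℂ) = K k k * K l l - (‖K k l‖ : ℂ) ^ 2 := by
  have h := hP {k, l}
  simp only [Finset.insert_subset_iff, Finset.singleton_subset_iff] at h
  rw [incl2, h, Matrix.det_submatrix_pair_s11 K hkl, ← hK.apply l k, Complex.star_def,
    Complex.mul_conj']

theorem simple_iff_kernel_entries {n : ℕ} (hN : 1 < N) (hP : IsDSD P K) (hK : K.IsHermitian) :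
    ((∀ k, incl1 P k = (n : ℝ) / N ∧ K k k = (n : ℂ) / N) ∧
      (∀ k l, k ≠ l →
        incl2 P k l = (n : ℝ) * ((n : ℝ) - 1) / ((N : ℝ) * ((N : ℝ) - 1)) ∧
        K k k * K l l - (‖K k l‖ : ℂ) ^ 2 =
          (((n : ℝ) * ((n : ℝ) - 1) / ((N : ℝ) * ((N : ℝ) - 1)) : ℝ) : ℂ))) ↔
    (∀ k, K k k = (n : ℂ) / N) ∧
      ∀ k l, k ≠ l → ‖K k l‖ ^ 2 = (n : ℝ) * (N - n) / (N ^ 2 * (N - 1)) := by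
  have hN0 : (N : ℝ) ≠ 0 := by positivity
  have hN1 : (N : ℝ) - 1 ≠ 0 := sub_ne_zero.2 (by exact_mod_cast hN.ne')
  have hq : ((n : ℝ) / N) ^ 2 - n * (n - 1) / (N * (N - 1)) =
      n * (N - n) / (N ^ 2 * (N - 1)) := by
    field_simp
    ring
  have hminor : ∀ k l, K k k = (n : ℂ) / N → K l l = (n : ℂ) / N →
      K k k * K l l - (‖K k l‖ : ℂ) ^ 2 = (((n / N) ^ 2 - ‖K k l‖ ^ 2 : ℝ) : ℂ) := by
    intro k l hk hl
    rw [hk, hl]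
    push_cast
    ring
  constructor
  · rintro ⟨h1, h2⟩
    have hdiag k : K k k = (n : ℂ) / N := (h1 k).2
    refine ⟨hdiag, fun k l hkl => ?_⟩
    have h := (h2 k l hkl).2
    rw [hminor k l (hdiag k) (hdiag l)] at h
    linarith [Complex.ofReal_inj.1 h]
  · rintro ⟨hdiag, hoff⟩
    have hminor' k l (hkl : k ≠ l) : K k k * K l l - (‖K k l‖ : ℂ) ^ 2 =
        (((n : ℝ) * ((n : ℝ) - 1) / ((N : ℝ) * ((N : ℝ) - 1)) : ℝ) : ℂ) := by
      rw [hminor k l (hdiag k) (hdiag l), hoff k l hkl, ← hq, sub_sub_cancel]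
    refine ⟨fun k => ⟨?_, hdiag k⟩, fun k l hkl => ⟨?_, hminor' k l hkl⟩⟩
    · exact Complex.ofReal_injective (by push_cast; exact (hP.incl1_eq k).trans (hdiag k))
    · exact_mod_cast (hP.incl2_eq hK hkl).trans (hminor' k l hkl)

end IsDSD

namespace Matrix

variable {𝕜 m n : Type*} [RCLike 𝕜] [Fintype m]

theorem conjTranspose_mul_self_apply (F : Matrix m n ℂ) (k l : n) :
    (Fᴴ * F) k l = ∑ j, starRingEnd ℂ (F j k) * F j l := rfl

theorem conjTranspose_mul_self_apply_self (F : Matrix m n 𝕜) (k : n) :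
    (Fᴴ * F) k k = ((∑ j, ‖F j k‖ ^ 2 : ℝ) : 𝕜) := by
  push_cast
  exact Finset.sum_congr rfl fun j _ => RCLike.conj_mul _

namespace IsHermitian

variable {A : Matrix m m 𝕜}

theorem trace_mul_self_eq_sum_norm_sq (hA : A.IsHermitian) :
    (A * A).trace = ((∑ k, ∑ l, ‖A k l‖ ^ 2 : ℝ) : 𝕜) := by
  push_cast
  refine Finset.sum_congr rfl fun k _ => Finset.sum_congr rfl fun l _ => ?_
  change A k l * A l k = _
  rw [← hA.apply l k, RCLike.star_def, RCLike.mul_conj]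

variable [DecidableEq m]

theorem trace_mul_self_eq_sum_eigenvalues_sq (hA : A.IsHermitian) :
    (A * A).trace = ∑ i, (hA.eigenvalues i : 𝕜) ^ 2 := by
  conv_lhs => rw [hA.spectral_theorem]
  rw [← map_mul, Unitary.conjStarAlgAut_apply, trace_mul_cycle,
    Unitary.coe_star_mul_self, one_mul, diagonal_mul_diagonal, trace_diagonal]
  simp [sq]

theorem eigenvalues_eq_zero_or_one (hA : A.IsHermitian)
    (h01 : ∀ i, hA.eigenvalues i ∈ Set.Icc (0 : ℝ) 1) (htr : (A * A).trace = A.trace) (i : m) :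
    hA.eigenvalues i = 0 ∨ hA.eigenvalues i = 1 := by
  have hsum : ∑ i, hA.eigenvalues i * (1 - hA.eigenvalues i) = 0 := by
    rw [hA.trace_mul_self_eq_sum_eigenvalues_sq, hA.trace_eq_sum_eigenvalues] at htr
    have := congrArg RCLike.re htr
    simp only [map_sum, ← RCLike.ofReal_pow, RCLike.ofReal_re] at this
    simp only [mul_sub, mul_one, Finset.sum_sub_distrib, ← sq, this, sub_self]
  have hterm := (Finset.sum_eq_zero_iff_of_nonneg fun j _ =>
    mul_nonneg (h01 j).1 (sub_nonneg.2 (h01 j).2)).1 hsum i (Finset.mem_univ i)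
  rcases mul_eq_zero.1 hterm with h | h
  · exact .inl h
  · exact .inr (sub_eq_zero.1 h).symm

theorem exists_eq_conjTranspose_mul_self (hA : A.IsHermitian)
    (h01 : ∀ i, hA.eigenvalues i = 0 ∨ hA.eigenvalues i = 1) {r : ℕ} (htr : A.trace = r) :
    ∃ G : Matrix (Fin r) m 𝕜, G * Gᴴ = 1 ∧ A = Gᴴ * G := by
  set S := Finset.univ.filter fun i => hA.eigenvalues i = 1
  have hind i : (hA.eigenvalues i : 𝕜) = if hA.eigenvalues i = 1 then 1 else 0 := by
    rcases h01 i with h | h <;> simp [h]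
  have hcard : S.card = r := by
    rw [hA.trace_eq_sum_eigenvalues] at htr
    simp_rw [hind, Finset.sum_boole] at htr
    exact_mod_cast htr
  let f : Fin r → m := fun j => (S.equivFinOfCardEq hcard).symm j
  have hf : f.Injective := Subtype.val_injective.comp (Equiv.injective _)
  let V : Matrix m m 𝕜 := hA.eigenvectorUnitary
  -- the rows of `G` are the conjugated eigenvectors for the eigenvalue `1`
  refine ⟨(V.submatrix id f)ᴴ, ?_, ?_⟩
  · rw [conjTranspose_conjTranspose, conjTranspose_submatrix,
      ← submatrix_mul _ _ _ _ _ Function.bijective_id, ← star_eq_conjTranspose,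
      Unitary.coe_star_mul_self, submatrix_one _ hf]
  · ext k l
    have hsum : ∑ j, V k (f j) * star (V l (f j)) = ∑ i ∈ S, V k i * star (V l i) := by
      rw [← Finset.sum_coe_sort S]
      exact (S.equivFinOfCardEq hcard).symm.sum_comp fun i : S => V k i * star (V l i)
    conv_lhs => rw [hA.spectral_theorem, Unitary.conjStarAlgAut_apply]
    simp only [mul_apply (M := _ * _), mul_diagonal, Function.comp_apply, hind, star_apply,
      mul_apply (M := (V.submatrix id f)ᴴᴴ), conjTranspose_apply, star_star, submatrix_apply, id,
      hsum]
    rw [Finset.sum_filter]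
    exact Finset.sum_congr rfl fun i _ => by split_ifs <;> simp [V]

end IsHermitian

end Matrix

open Matrix

theorem diag_and_norm_sq_of_etf {N n : ℕ} (hn : 0 < n) (hnN : n < N)
    (F : Matrix (Fin n) (Fin N) ℂ)
    (hcol : ∀ k, ∑ j, ‖F j k‖ ^ 2 = 1)
    (hang : ∀ k l, k ≠ l → ‖∑ j, (starRingEnd ℂ) (F j k) * F j l‖ =
      √(((N : ℝ) - n) / ((n : ℝ) * ((N : ℝ) - 1)))) :
    (∀ k, (((n : ℂ) / N) • (Fᴴ * F)) k k = (n : ℂ) / N) ∧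
      ∀ k l, k ≠ l →
        ‖(((n : ℂ) / N) • (Fᴴ * F)) k l‖ ^ 2 = (n : ℝ) * (N - n) / (N ^ 2 * (N - 1)) := by
  have hn0 : (n : ℝ) ≠ 0 := by positivity
  have hN1 : (1 : ℝ) < N := by exact_mod_cast (show 1 < N by omega)
  have hnN' : (n : ℝ) < N := by exact_mod_cast hnN
  refine ⟨fun k => ?_, fun k l hkl => ?_⟩
  · rw [Matrix.smul_apply, conjTranspose_mul_self_apply_self, hcol, RCLike.ofReal_one,
      smul_eq_mul, mul_one]
  · have hx : 0 ≤ ((N : ℝ) - n) / ((n : ℝ) * ((N : ℝ) - 1)) :=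
      div_nonneg (by linarith) (mul_nonneg (by positivity) (by linarith))
    rw [Matrix.smul_apply, conjTranspose_mul_self_apply, smul_eq_mul, norm_mul, hang k l hkl,
      mul_pow, Real.sq_sqrt hx, Complex.norm_div, Complex.norm_natCast, Complex.norm_natCast]
    field_simp

theorem trace_eq_of_diag {N n : ℕ} (hN : N ≠ 0) {K : Matrix (Fin N) (Fin N) ℂ}
    (hdiag : ∀ k, K k k = (n : ℂ) / N) : K.trace = n := by
  simp only [trace, diag, hdiag, Finset.sum_const, Finset.card_univ, Fintype.card_fin,
    nsmul_eq_mul]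
  exact mul_div_cancel₀ _ (Nat.cast_ne_zero.2 hN)

theorem trace_mul_self_eq_of_diag_and_norm_sq {N n : ℕ} (hn : 0 < n) (hnN : n < N)
    {K : Matrix (Fin N) (Fin N) ℂ} (hK : K.IsHermitian) (hdiag : ∀ k, K k k = (n : ℂ) / N)
    (hoff : ∀ k l, k ≠ l → ‖K k l‖ ^ 2 = (n : ℝ) * (N - n) / (N ^ 2 * (N - 1))) :
    (K * K).trace = n := by
  have hN0 : (N : ℝ) ≠ 0 := by exact_mod_cast (show N ≠ 0 by omega)
  have hN1 : (N : ℝ) - 1 ≠ 0 := sub_ne_zero.2 (by exact_mod_cast (show N ≠ 1 by omega))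
  set q : ℝ := n * (N - n) / (N ^ 2 * (N - 1))
  have hrow k : ∑ l, ‖K k l‖ ^ 2 = ∑ l, (q + if l = k then (n / N : ℝ) ^ 2 - q else 0) := by
    refine Finset.sum_congr rfl fun l _ => ?_
    by_cases hlk : l = k
    · subst hlk
      rw [hdiag, if_pos rfl, Complex.norm_div, Complex.norm_natCast, Complex.norm_natCast]
      ring
    · rw [hoff k l (Ne.symm hlk), if_neg hlk, add_zero]
  have hsum : ∑ k, ∑ l, ‖K k l‖ ^ 2 = (n : ℝ) := by
    simp only [hrow, Finset.sum_add_distrib, Finset.sum_ite_eq', Finset.mem_univ, if_true,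
      Finset.sum_const, Finset.card_univ, Fintype.card_fin, nsmul_eq_mul, q]
    field_simp
    ring
  rw [hK.trace_mul_self_eq_sum_norm_sq, hsum, RCLike.ofReal_natCast]

theorem exists_etf_of_diag_and_norm_sq {N n : ℕ} (hn : 0 < n) (hnN : n < N)
    {K : Matrix (Fin N) (Fin N) ℂ} (hK : K.IsHermitian)
    (hcontr : ∀ i, hK.eigenvalues i ∈ Set.Icc (0 : ℝ) 1) (hdiag : ∀ k, K k k = (n : ℂ) / N)
    (hoff : ∀ k l, k ≠ l → ‖K k l‖ ^ 2 = (n : ℝ) * (N - n) / (N ^ 2 * (N - 1))) :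
    ∃ F : Matrix (Fin n) (Fin N) ℂ,
      (∀ k, ∑ j, ‖F j k‖ ^ 2 = 1) ∧
      (∀ k l, k ≠ l →
        ‖∑ j, (starRingEnd ℂ) (F j k) * F j l‖ =
          Real.sqrt (((N : ℝ) - n) / ((n : ℝ) * ((N : ℝ) - 1)))) ∧
      F * F.conjTranspose = ((N : ℂ) / n) • (1 : Matrix (Fin n) (Fin n) ℂ) ∧
      K = ((n : ℂ) / N) • (F.conjTranspose * F) := by
  have hN0 : N ≠ 0 := by omega
  have hN1 : (N : ℝ) - 1 ≠ 0 := sub_ne_zero.2 (by exact_mod_cast (show N ≠ 1 by omega))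
  have hn0 : (n : ℝ) ≠ 0 := by positivity
  have htr : K.trace = n := trace_eq_of_diag hN0 hdiag
  obtain ⟨G, hGG, hKG⟩ := hK.exists_eq_conjTranspose_mul_self
    (hK.eigenvalues_eq_zero_or_one hcontr
      ((trace_mul_self_eq_of_diag_and_norm_sq hn hnN hK hdiag hoff).trans htr.symm)) htr
  set c : ℂ := (√(N / n : ℝ) : ℂ)
  have hc : star c * c = (N : ℂ) / n := by
    rw [Complex.star_def, Complex.conj_ofReal, ← Complex.ofReal_mul,
      Real.mul_self_sqrt (by positivity)]
    push_cast
    rfl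
  have hgram : (c • G)ᴴ * (c • G) = ((N : ℂ) / n) • K := by
    rw [conjTranspose_smul, Matrix.smul_mul, Matrix.mul_smul, smul_smul, hc, hKG]
  have hNn : (n : ℂ) / N * (N / n) = 1 := by
    rw [div_mul_div_cancel₀' (Nat.cast_ne_zero.2 hn.ne'), div_self (Nat.cast_ne_zero.2 hN0)]
  refine ⟨c • G, fun k => ?_, fun k l hkl => ?_, ?_, ?_⟩
  · have h := conjTranspose_mul_self_apply_self (c • G) k
    rw [hgram, Matrix.smul_apply, hdiag, smul_eq_mul, mul_comm, hNn] at h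
    exact RCLike.ofReal_injective (h.symm.trans RCLike.ofReal_one.symm)
  · rw [← conjTranspose_mul_self_apply, hgram, Matrix.smul_apply, smul_eq_mul, norm_mul,
      Complex.norm_div, Complex.norm_natCast, Complex.norm_natCast]
    rw [show ((N : ℝ) - n) / (n * (N - 1)) = (N / n * ‖K k l‖) ^ 2 by
      rw [mul_pow, hoff k l hkl]; field_simp, Real.sqrt_sq (by positivity)]
  · rw [conjTranspose_smul, Matrix.smul_mul, Matrix.mul_smul, smul_smul, hGG, mul_comm, hc]
  · rw [hgram, smul_smul, hNn, one_smul]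

theorem simple_iff_etf_general (N n : ℕ) (hn : 0 < n) (hnN : n < N)
    (K : Matrix (Fin N) (Fin N) ℂ) (hK : K.IsHermitian)
    (hcontr : ∀ i, hK.eigenvalues i ∈ Set.Icc (0 : ℝ) 1)
    (P : Finset (Fin N) → ℝ)
    (hDSD : IsDSD P K) :
    ((∀ k, incl1 P k = (n : ℝ) / N ∧ K k k = (n : ℂ) / N) ∧
      (∀ k l, k ≠ l →
        incl2 P k l = (n : ℝ) * ((n : ℝ) - 1) / ((N : ℝ) * ((N : ℝ) - 1)) ∧
        K k k * K l l - (‖K k l‖ : ℂ) ^ 2 =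
          (((n : ℝ) * ((n : ℝ) - 1) / ((N : ℝ) * ((N : ℝ) - 1)) : ℝ) : ℂ))) ↔
    (∃ F : Matrix (Fin n) (Fin N) ℂ,
      (∀ k, ∑ j, ‖F j k‖ ^ 2 = 1) ∧
      (∀ k l, k ≠ l →
        ‖∑ j, (starRingEnd ℂ) (F j k) * F j l‖ =
          Real.sqrt (((N : ℝ) - n) / ((n : ℝ) * ((N : ℝ) - 1)))) ∧
      F * F.conjTranspose = ((N : ℂ) / n) • (1 : Matrix (Fin n) (Fin n) ℂ) ∧
      K = ((n : ℂ) / N) • (F.conjTranspose * F)) := by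
  rw [hDSD.simple_iff_kernel_entries (by omega) hK]
  refine ⟨fun ⟨hdiag, hoff⟩ => exists_etf_of_diag_and_norm_sq hn hnN hK hcontr hdiag hoff, ?_⟩
  rintro ⟨F, hcol, hang, -, rfl⟩
  exact diag_and_norm_sq_of_etf hn hnN F hcol hang

/-- **(N,n)-simple determinantal sampling designs are exactly those whose kernel comes
from an equiangular tight frame of ℂⁿ.** -/
theorem simple_iff_etf (N n : ℕ) (hn : 0 < n) (hnN : n < N)
    (K : Matrix (Fin N) (Fin N) ℂ) (hK : K.IsHermitian)
    (hcontr : ∀ i, hK.eigenvalues i ∈ Set.Icc (0 : ℝ) 1)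
    (P : Finset (Fin N) → ℝ) (hpos : ∀ s, 0 ≤ P s) (hsum : ∑ s, P s = 1)
    (hDSD : IsDSD P K) :
    ((∀ k, incl1 P k = (n : ℝ) / N ∧ K k k = (n : ℂ) / N) ∧
      (∀ k l, k ≠ l →
        incl2 P k l = (n : ℝ) * ((n : ℝ) - 1) / ((N : ℝ) * ((N : ℝ) - 1)) ∧
        K k k * K l l - (‖K k l‖ : ℂ) ^ 2 =
          (((n : ℝ) * ((n : ℝ) - 1) / ((N : ℝ) * ((N : ℝ) - 1)) : ℝ) : ℂ))) ↔
    (∃ F : Matrix (Fin n) (Fin N) ℂ,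
      (∀ k, ∑ j, ‖F j k‖ ^ 2 = 1) ∧
      (∀ k l, k ≠ l →
        ‖∑ j, (starRingEnd ℂ) (F j k) * F j l‖ =
          Real.sqrt (((N : ℝ) - n) / ((n : ℝ) * ((N : ℝ) - 1)))) ∧
      F * F.conjTranspose = ((N : ℂ) / n) • (1 : Matrix (Fin n) (Fin n) ℂ) ∧
      K = ((n : ℂ) / N) • (F.conjTranspose * F)) :=
  simple_iff_etf_general N n hn hnN K hK hcontr P hDSD
end

section
/- Let n, r, N be positive integers with n < N, r < N, and gcd(r,N) = 1. Then ∑_{k=1}^{N−1} sin²(nrkπ/N) / sin²(rkπ/N) = n(N−n). -/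
/-!
With `ζ = exp (2πi r / N)`, a primitive `N`-th root of unity because `gcd(r, N) = 1`, the `k`-th
summand is `|1 + ζᵏ + ⋯ + ζ^{k(n-1)}|²` (sum a geometric series and use
`|exp (ix) - 1| = 2 |sin (x/2)|`). Expanding the square and summing over all `k < N`,
orthogonality of the characters `k ↦ ζ^{k(p-q)}` leaves only the diagonal `p = q`, which gives
`n N`, since `p, q < n ≤ N`. The term `k = 0` contributes `n²`.
-/

open Complex ComplexConjugate Finset

theorem geom_sum_eq_ite_of_pow_eq_one {K : Type*} [Field K] [DecidableEq K] {c : K} {N : ℕ}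
    (hc : c ^ N = 1) : ∑ k ∈ range N, c ^ k = if c = 1 then (N : K) else 0 := by
  split_ifs with h
  · simp [h]
  · rw [geom_sum_eq h, hc, sub_self, zero_div]

theorem norm_geom_sum_exp_mul_I_sq {x : ℝ} (hx : exp (I * x) ≠ 1) (n : ℕ) :
    ‖∑ p ∈ range n, exp (I * x) ^ p‖ ^ 2 = Real.sin (n * x / 2) ^ 2 / Real.sin (x / 2) ^ 2 := by
  have hpow : exp (I * x) ^ n = exp (I * (n * x : ℝ)) := by
    rw [← exp_nat_mul]; push_cast; ring_nf
  rw [geom_sum_eq hx, norm_div, hpow, norm_exp_I_mul_ofReal_sub_one,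
    norm_exp_I_mul_ofReal_sub_one, norm_mul, norm_mul, mul_div_mul_left _ _ (by norm_num),
    Real.norm_eq_abs, Real.norm_eq_abs, ← abs_div, sq_abs, div_pow]

theorem IsPrimitiveRoot.sum_norm_geom_sum_pow_sq {ζ : ℂ} {N n : ℕ} (hζ : IsPrimitiveRoot ζ N)
    (hn : n ≤ N) : ∑ k ∈ range N, ‖∑ p ∈ range n, (ζ ^ k) ^ p‖ ^ 2 = n * N := by
  obtain rfl | hN := eq_or_ne N 0
  · simp_all
  have hζ0 : ζ ≠ 0 := hζ.ne_zero hN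
  have hconj : conj ζ = ζ⁻¹ := (inv_eq_conj (hζ.norm'_eq_one hN)).symm
  have horth : ∀ p ∈ range n, ∀ q ∈ range n,
      ∑ k ∈ range N, (ζ ^ p * (ζ ^ q)⁻¹) ^ k = if p = q then (N : ℂ) else 0 := by
    intro p hp q hq
    have hpow : (ζ ^ p * (ζ ^ q)⁻¹) ^ N = 1 := by
      rw [mul_pow, inv_pow, ← pow_mul, ← pow_mul, pow_mul', pow_mul' ζ q, hζ.pow_eq_one]
      simp
    rw [geom_sum_eq_ite_of_pow_eq_one hpow]
    refine if_congr ?_ rfl rfl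
    rw [mul_inv_eq_one₀ (pow_ne_zero _ hζ0)]
    exact ⟨fun h => hζ.pow_inj (by grind) (by grind) h, fun h => h ▸ rfl⟩
  apply ofReal_injective
  push_cast
  simp_rw [← mul_conj', map_sum, map_pow, hconj, sum_mul_sum]
  have hexpand : ∀ k p q : ℕ, (ζ ^ k) ^ p * (ζ⁻¹ ^ k) ^ q = (ζ ^ p * (ζ ^ q)⁻¹) ^ k := by
    intro k p q; ring
  calc _ = ∑ p ∈ range n, ∑ q ∈ range n, ∑ k ∈ range N, (ζ ^ p * (ζ ^ q)⁻¹) ^ k := by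
        simp_rw [hexpand]; rw [sum_comm]; exact sum_congr rfl fun _ _ => sum_comm
    _ = ∑ p ∈ range n, ∑ q ∈ range n, if p = q then (N : ℂ) else 0 :=
        sum_congr rfl fun p hp => sum_congr rfl (horth p hp)
    _ = ∑ p ∈ range n, (N : ℂ) := sum_congr rfl fun p hp => by rw [sum_ite_eq, if_pos hp]
    _ = n * N := by simp

theorem sin_quotient_sum_general (n r N : ℕ) (hnN : n < N) (hgcd : Nat.gcd r N = 1) :
    ∑ k ∈ Finset.Icc 1 (N - 1),
      Real.sin ((n : ℝ) * r * k * Real.pi / N) ^ 2 /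
        Real.sin ((r : ℝ) * k * Real.pi / N) ^ 2 = (n : ℝ) * ((N : ℝ) - n) := by
  have hN : N ≠ 0 := by omega
  set ζ := exp (2 * Real.pi * I * (r / N))
  have hζ : IsPrimitiveRoot ζ N := isPrimitiveRoot_exp_of_coprime r N hN hgcd
  have hζ_pow (k : ℕ) : ζ ^ k = exp (I * (2 * r * k * Real.pi / N : ℝ)) := by
    rw [← exp_nat_mul]; push_cast; ring_nf
  have hterm : ∀ k ∈ Icc 1 (N - 1), Real.sin ((n : ℝ) * r * k * Real.pi / N) ^ 2 /
      Real.sin ((r : ℝ) * k * Real.pi / N) ^ 2 = ‖∑ p ∈ range n, (ζ ^ k) ^ p‖ ^ 2 := by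
    intro k hk
    have hζk : ζ ^ k ≠ 1 := hζ.pow_ne_one_of_pos_of_lt (by grind) (by grind)
    rw [hζ_pow] at hζk ⊢
    rw [norm_geom_sum_exp_mul_I_sq hζk]
    ring_nf
  have hsum := hζ.sum_norm_geom_sum_pow_sq hnN.le
  rw [range_eq_Ico, sum_eq_sum_Ico_succ_bot (by omega),
    ← Icc_sub_one_right_eq_Ico_of_not_isMin (by simpa)] at hsum
  rw [sum_congr rfl hterm]
  simp only [pow_zero, one_pow, sum_const, card_range, nsmul_eq_mul, mul_one,
    RCLike.norm_natCast, zero_add] at hsum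
  linear_combination hsum

/-- **A trigonometric identity from fixed size determinantal sampling designs**:
for `n < N`, `r < N` with `gcd(r,N) = 1`,
`∑_{k=1}^{N−1} sin²(nrkπ/N)/sin²(rkπ/N) = n(N−n)`. -/
theorem sin_quotient_sum (n r N : ℕ) (hn : 0 < n) (hnN : n < N)
    (hr : 0 < r) (hrN : r < N) (hgcd : Nat.gcd r N = 1) :
    ∑ k ∈ Finset.Icc 1 (N - 1),
      Real.sin ((n : ℝ) * r * k * Real.pi / N) ^ 2 /
        Real.sin ((r : ℝ) * k * Real.pi / N) ^ 2 = (n : ℝ) * ((N : ℝ) - n) :=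
  sin_quotient_sum_general n r N hnN hgcd
end

section
/- Let N be a prime number and n < N a positive integer. For each r with 1 ≤ r ≤ N−1, let K^{r,N,n} be the N×N complex matrix with entries K^{r,N,n}_{kl} = (1/N) ∑_{p=0}^{n−1} e^{2πi r (k−l) p / N}, and let K^{N,n} be the N×N matrix with diagonal entries n/N and off-diagonal entries (N−n)/(N(N−1)). Then K^{N,n} = (1/(N−1)) ∑_{r=1}^{N−1} K^{r,N,n}. -/
/-- The Toeplitz kernel `K^{r,N,n}` built on the primitive `N`-th root of unity
`e^{2πir/N}`: `K^{r,N,n}_{kl} = (1/N) ∑_{p=0}^{n−1} e^{2πi r (k−l) p / N}`. -/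
noncomputable def rootKernel (r N n : ℕ) : Matrix (Fin N) (Fin N) ℂ := fun k l =>
  (1 / (N : ℂ)) * ∑ p ∈ Finset.range n,
    Complex.exp (2 * (Real.pi : ℂ) * Complex.I * (r : ℂ) *
      (((k : ℕ) : ℂ) - ((l : ℕ) : ℂ)) * (p : ℂ) / (N : ℂ))

/-!
With `ζ = e^{2πi/N}`, the `(k, l)` entry of `∑_r K^{r,N,n}` is `(1/N) ∑_{p<n} ∑_{r=1}^{N-1} (ζ^{(k-l)p})^r`,
and the inner geometric sum is `N - 1` when `N ∣ (k-l)p` and `-1` otherwise. As `N` is prime and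
`|k - l|, p < N`, the divisibility holds exactly when `k = l` or `p = 0`, which gives `n(N-1)` on the
diagonal and `(N-1) - (n-1)` off it.
-/

open Finset Complex Real

theorem IsPrimitiveRoot.sum_Icc_pow_zpow {K : Type*} [Field K] {ζ : K} {N : ℕ}
    (hζ : IsPrimitiveRoot ζ N) (hN : 0 < N) (m : ℤ) :
    ∑ r ∈ Icc 1 (N - 1), (ζ ^ m) ^ r = if (N : ℤ) ∣ m then (N : K) - 1 else -1 := by
  obtain ⟨M, rfl⟩ : ∃ M, N = M + 1 := ⟨N - 1, by omega⟩
  have hsplit : ∑ r ∈ range (M + 1), (ζ ^ m) ^ r = 1 + ∑ r ∈ Icc 1 M, (ζ ^ m) ^ r := by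
    rw [range_eq_Ico, sum_eq_sum_Ico_succ_bot (by omega), pow_zero, Ico_add_one_right_eq_Icc]
  simp only [add_tsub_cancel_right, Nat.cast_add, Nat.cast_one, add_sub_cancel_right]
  split_ifs with hdvd
  · rw [(hζ.zpow_eq_one_iff_dvd m).mpr (by simpa using hdvd)]
    simp
  · have hne : ζ ^ m ≠ 1 := by
      rw [Ne, hζ.zpow_eq_one_iff_dvd]; simpa using hdvd
    have hroot : (ζ ^ m) ^ (M + 1) = 1 := by
      rw [← zpow_natCast, ← zpow_mul, mul_comm, zpow_mul, zpow_natCast, hζ.pow_eq_one, one_zpow]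
    have hgeom : ∑ r ∈ range (M + 1), (ζ ^ m) ^ r = 0 := by
      have := mul_geom_sum (ζ ^ m) (M + 1)
      rw [hroot, sub_self, mul_eq_zero] at this
      exact this.resolve_left (sub_ne_zero.mpr hne)
    linear_combination hgeom - hsplit

theorem rootKernel_apply_eq_sum_zpow (r N n : ℕ) (k l : Fin N) :
    rootKernel r N n k l =
      1 / N * ∑ p ∈ range n, (exp (2 * π * I / N) ^ (((k : ℤ) - l) * p)) ^ r := by
  unfold rootKernel
  congr 1
  refine sum_congr rfl fun p _ => ?_
  rw [← zpow_natCast, ← zpow_mul, ← exp_int_mul]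
  congr 1
  push_cast
  ring

theorem sum_rootKernel_apply {N : ℕ} (hN : 0 < N) (n : ℕ) (k l : Fin N) :
    ∑ r ∈ Icc 1 (N - 1), rootKernel r N n k l =
      1 / N * ∑ p ∈ range n, if (N : ℤ) ∣ ((k : ℤ) - l) * p then (N : ℂ) - 1 else -1 := by
  simp_rw [rootKernel_apply_eq_sum_zpow, ← mul_sum]
  rw [sum_comm]
  simp_rw [(isPrimitiveRoot_exp N hN.ne').sum_Icc_pow_zpow hN]

theorem Nat.Prime.intCast_dvd_sub_mul_iff {N : ℕ} (hN : N.Prime) {a b p : ℕ} (ha : a < N)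
    (hb : b < N) (hp : p < N) : (N : ℤ) ∣ ((a : ℤ) - b) * p ↔ a = b ∨ p = 0 := by
  rw [(Nat.prime_iff_prime_int.mp hN).dvd_mul, Int.natCast_dvd_natCast]
  refine or_congr ⟨fun h => ?_, fun h => by simp [h]⟩
    ⟨fun h => Nat.eq_zero_of_dvd_of_lt h hp, fun h => by simp [h]⟩
  have := Int.eq_zero_of_abs_lt_dvd h (by rw [abs_lt]; omega)
  omega

/-- **For `N` prime, `K^{N,n}` is the average of the kernels `K^{r,N,n}`,
`r = 1, …, N−1`**, where `K^{N,n}` has diagonal entries `n/N` and off-diagonal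
entries `(N−n)/(N(N−1))`. -/
theorem equal_kernel_average (N n : ℕ) (hN : Nat.Prime N) (hn : 0 < n) (hnN : n < N) :
    (fun k l : Fin N =>
        if k = l then (n : ℂ) / N else ((N : ℂ) - n) / ((N : ℂ) * ((N : ℂ) - 1))) =
      (1 / ((N : ℂ) - 1)) • ∑ r ∈ Finset.Icc 1 (N - 1), rootKernel r N n := by
  have hN1 : (N : ℂ) - 1 ≠ 0 := sub_ne_zero.mpr (by exact_mod_cast hN.one_lt.ne')
  have hN0 : (N : ℂ) ≠ 0 := by exact_mod_cast hN.ne_zero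
  funext k l
  rw [Matrix.smul_apply, Matrix.sum_apply, sum_rootKernel_apply hN.pos]
  have hterm : ∀ p ∈ range n, (if (N : ℤ) ∣ ((k : ℤ) - l) * p then (N : ℂ) - 1 else -1) =
      if k = l ∨ p = 0 then (N : ℂ) - 1 else -1 := fun p hp =>
    if_congr (by rw [hN.intCast_dvd_sub_mul_iff k.isLt l.isLt ((mem_range.mp hp).trans hnN),
      Fin.val_inj]) rfl rfl
  rw [sum_congr rfl hterm]
  split_ifs with hkl
  · simp only [hkl, true_or, if_true, sum_const, card_range, nsmul_eq_mul, smul_eq_mul]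
    field_simp
  · obtain ⟨m, rfl⟩ := Nat.exists_eq_add_of_lt hn
    simp only [hkl, false_or, sum_range_succ', Nat.add_eq_zero_iff, one_ne_zero, and_false,
      ↓reduceIte, sum_neg_distrib, sum_const, card_range, nsmul_eq_mul, mul_one, smul_eq_mul,
      Nat.cast_add, Nat.cast_one]
    field_simp
    ring
end
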